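/- Failure of Gleason's theorem for unentangled multiqubit projections (Wallach's result recovered as a corollary): for every n ≥ 1 there exists a function f, defined on the set of product unit vectors of (ℂ²)^{⊗n} and depending only on rays, with values in {0,1}, such that Σ_{ψ ∈ B} f(ψ) = 1 for every orthonormal basis B of (ℂ²)^{⊗n} consisting of product vectors, and yet there is no positive semidefinite operator ρ on (ℂ²)^{⊗n} with trace 1 satisfying f(ψ) = ⟨ψ, ρψ⟩ for all product unit vectors ψ. -/

import Mathlib

open scoped InnerProductSpace
open MeasureTheory

noncomputable section

abbrev Qubit : Type := EuclideanSpace ℂ (Fin 2)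
abbrev NQubit (n : ℕ) : Type := EuclideanSpace ℂ (Fin n → Fin 2)

/-- The product vector `ψ₁ ⊗ ⋯ ⊗ ψₙ` in `(ℂ²)^{⊗n}`, modelled concretely as
`EuclideanSpace ℂ (Fin n → Fin 2)`; its inner products satisfy
`⟨tens ψ, tens χ⟩ = ∏ j, ⟨ψ j, χ j⟩`. -/
noncomputable def tens {n : ℕ} (ψ : Fin n → Qubit) : NQubit n :=
  WithLp.toLp 2 (fun f => ∏ j, ψ j (f j))

/-- A vector of `(ℂ²)^{⊗n}` is a product vector if it is of the form `ψ₁ ⊗ ⋯ ⊗ ψₙ`. -/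
def IsProduct {n : ℕ} (v : NQubit n) : Prop := ∃ ψ : Fin n → Qubit, v = tens ψ

/-- A finite set of vectors forming an orthonormal basis of `H`. -/
def IsONBasis {H : Type*} [NormedAddCommGroup H] [InnerProductSpace ℂ H]
    (B : Finset H) : Prop :=
  Orthonormal ℂ (fun v : B => (v : H)) ∧ Submodule.span ℂ (B : Set H) = ⊤

/-- A KS-colouring of a set `S` of unit vectors: a `{0,1}`-valued map (modelled as a
predicate, `c v` meaning value `1`) such that every orthonormal basis contained in `S`
has exactly one element of value `1`, and no two mutually orthogonal elements of `S`
both have value `1`. -/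
def IsKSColouring {H : Type*} [NormedAddCommGroup H] [InnerProductSpace ℂ H]
    (S : Set H) (c : H → Prop) : Prop :=
  (∀ B : Finset H, ↑B ⊆ S → IsONBasis B → ∃! v, v ∈ B ∧ c v) ∧
  (∀ ψ ∈ S, ∀ χ ∈ S, ⟪ψ, χ⟫_ℂ = 0 → ¬(c ψ ∧ c χ))

/-!
Colour the rays of `ℂ²` by an explicit half of the Bloch sphere (the open upper hemisphere
together with half of the equator), so that of any two orthogonal rays exactly one is coloured.
A product vector `ψ₁ ⊗ ⋯ ⊗ ψₙ` gets the value `1` iff every factor is coloured; the factors are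
determined up to scalars, so this depends only on the ray. Two orthogonal product vectors have
orthogonal factors at some site, hence differ in colour there, so the colour patterns of a product
orthonormal basis are `2ⁿ` distinct elements of `{0,1}ⁿ`: each pattern, in particular the all-ones
one, occurs exactly once. On the other hand `v ↦ ⟪v, ρ v⟫` is a quadratic form along
`φ ↦ φ ⊗ e₀ ⊗ ⋯ ⊗ e₀`; it cannot be `1` at `e₀`, `0` at `e₁` and `{0,1}`-valued on the unit
circle through them.
-/

open scoped ComplexConjugate
open Finset

def IsLexPos (w : ℂ) : Prop := 0 < w.im ∨ (w.im = 0 ∧ 0 < w.re)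

lemma isLexPos_neg_iff {w : ℂ} (hw : w ≠ 0) : IsLexPos (-w) ↔ ¬ IsLexPos w := by
  have hw' : ¬ (w.re = 0 ∧ w.im = 0) := fun h => hw (Complex.ext h.1 h.2)
  simp only [IsLexPos, Complex.neg_im, Complex.neg_re, neg_pos, neg_eq_zero]
  grind

lemma isLexPos_ofReal_mul_iff {r : ℝ} (hr : 0 < r) (w : ℂ) : IsLexPos (r * w) ↔ IsLexPos w := by
  simp [IsLexPos, mul_pos_iff_of_pos_left hr, hr.ne']

namespace Qubit

def perp (ψ : Qubit) : Qubit := !₂[-conj (ψ 1), conj (ψ 0)]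

@[simp] lemma perp_apply_zero (ψ : Qubit) : perp ψ 0 = -conj (ψ 1) := rfl
@[simp] lemma perp_apply_one (ψ : Qubit) : perp ψ 1 = conj (ψ 0) := rfl

lemma inner_eq (ψ χ : Qubit) : ⟪ψ, χ⟫_ℂ = conj (ψ 0) * χ 0 + conj (ψ 1) * χ 1 := by
  simp [PiLp.inner_apply, Fin.sum_univ_two, mul_comm]

lemma inner_perp_self (ψ : Qubit) : ⟪perp ψ, ψ⟫_ℂ = 0 := by
  simp [inner_eq, mul_comm]

lemma inner_self_smul_eq (ψ χ : Qubit) :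
    ⟪ψ, ψ⟫_ℂ • χ = ⟪ψ, χ⟫_ℂ • ψ + ⟪perp ψ, χ⟫_ℂ • perp ψ := by
  simp only [inner_eq]
  ext i
  fin_cases i <;> simp only [Fin.zero_eta, Fin.mk_one, PiLp.add_apply, PiLp.smul_apply, smul_eq_mul,
    perp_apply_zero, perp_apply_one, map_neg, Complex.conj_conj] <;> ring

lemma exists_eq_smul_perp_of_inner_eq_zero {ψ χ : Qubit} (hψ : ψ ≠ 0) (h : ⟪ψ, χ⟫_ℂ = 0) :
    ∃ t : ℂ, χ = t • perp ψ := by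
  refine ⟨(⟪ψ, ψ⟫_ℂ)⁻¹ * ⟪perp ψ, χ⟫_ℂ, ?_⟩
  rw [mul_smul, ← zero_add (_ • perp ψ), ← zero_smul ℂ ψ, ← h, ← inner_self_smul_eq,
    inv_smul_smul₀ (inner_self_ne_zero.mpr hψ)]

lemma exists_eq_smul_of_inner_perp_eq_zero {ψ χ : Qubit} (hψ : ψ ≠ 0) (h : ⟪perp ψ, χ⟫_ℂ = 0) :
    ∃ t : ℂ, χ = t • ψ := by
  refine ⟨(⟪ψ, ψ⟫_ℂ)⁻¹ * ⟪ψ, χ⟫_ℂ, ?_⟩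
  rw [mul_smul, ← add_zero (_ • ψ), ← zero_smul ℂ (perp ψ), ← h, ← inner_self_smul_eq,
    inv_smul_smul₀ (inner_self_ne_zero.mpr hψ)]

/-- `‖ψ 0‖² - ‖ψ 1‖²` and `2 * conj (ψ 0) * ψ 1` are the `z` and `x + i y` coordinates of the Bloch
vector of `ψ`: this is the open upper hemisphere plus half of the equator. -/
def IsUpper (ψ : Qubit) : Prop :=
  ‖ψ 1‖ < ‖ψ 0‖ ∨ (‖ψ 1‖ = ‖ψ 0‖ ∧ IsLexPos (conj (ψ 0) * ψ 1))

lemma isUpper_smul_iff {c : ℂ} (hc : c ≠ 0) {ψ : Qubit} : IsUpper (c • ψ) ↔ IsUpper ψ := by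
  have hc' : 0 < ‖c‖ := norm_pos_iff.mpr hc
  have hprod : conj (c * ψ 0) * (c * ψ 1) = (Complex.normSq c : ℂ) * (conj (ψ 0) * ψ 1) := by
    rw [Complex.normSq_eq_conj_mul_self, map_mul]; ring
  simp only [IsUpper, PiLp.smul_apply, smul_eq_mul, hprod, norm_mul, mul_lt_mul_iff_of_pos_left hc',
    mul_right_inj' hc'.ne', isLexPos_ofReal_mul_iff (Complex.normSq_pos.mpr hc)]

lemma isUpper_perp_iff {ψ : Qubit} (hψ : ψ ≠ 0) : IsUpper (perp ψ) ↔ ¬ IsUpper ψ := by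
  have hw : ‖ψ 1‖ = ‖ψ 0‖ → conj (ψ 0) * ψ 1 ≠ 0 := by
    intro h h0
    have h01 : ψ 0 = 0 ∧ ψ 1 = 0 := by
      rw [← norm_eq_zero, ← norm_eq_zero (a := ψ 1), h, and_self]
      rcases mul_eq_zero.mp h0 with h0 | h0
      · simpa using h0
      · rw [← h, h0, norm_zero]
    exact hψ (by ext i; fin_cases i <;> simp [h01])
  have hperp : conj (-conj (ψ 1)) * conj (ψ 0) = -(conj (ψ 0) * ψ 1) := by
    rw [map_neg, Complex.conj_conj]; ring
  simp only [IsUpper, perp_apply_zero, perp_apply_one, hperp, norm_neg, Complex.norm_conj]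
  rcases lt_trichotomy ‖ψ 1‖ ‖ψ 0‖ with h | h | h
  · simp [h, h.ne', not_lt_of_gt h]
  · simp [h, isLexPos_neg_iff (hw h)]
  · simp [h, h.ne', not_lt_of_gt h]

lemma isUpper_iff_not_of_inner_eq_zero {ψ χ : Qubit} (hψ : ψ ≠ 0) (hχ : χ ≠ 0)
    (h : ⟪ψ, χ⟫_ℂ = 0) : IsUpper χ ↔ ¬ IsUpper ψ := by
  obtain ⟨t, rfl⟩ := exists_eq_smul_perp_of_inner_eq_zero hψ h
  rw [isUpper_smul_iff (left_ne_zero_of_smul hχ), isUpper_perp_iff hψ]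

end Qubit

section tens

variable {n : ℕ}

lemma tens_apply (ψ : Fin n → Qubit) (x : Fin n → Fin 2) : tens ψ x = ∏ j, ψ j (x j) := rfl

lemma inner_tens (ψ χ : Fin n → Qubit) : ⟪tens ψ, tens χ⟫_ℂ = ∏ j, ⟪ψ j, χ j⟫_ℂ := by
  simp only [PiLp.inner_apply, RCLike.inner_apply, tens_apply, map_prod, ← prod_mul_distrib]
  rw [prod_univ_sum, Fintype.piFinset_univ]

lemma norm_tens (ψ : Fin n → Qubit) : ‖tens ψ‖ = ∏ j, ‖ψ j‖ := by
  have h := inner_tens ψ ψ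
  simp only [inner_self_eq_norm_sq_to_K] at h
  norm_cast at h
  rw [prod_pow] at h
  exact (sq_eq_sq₀ (norm_nonneg _) (by positivity)).mp h

lemma tens_ne_zero_iff {ψ : Fin n → Qubit} : tens ψ ≠ 0 ↔ ∀ j, ψ j ≠ 0 := by
  rw [Ne, ← norm_eq_zero, norm_tens, prod_eq_zero_iff]
  simp

lemma inner_tens_update (ψ χ : Fin n → Qubit) (j : Fin n) (a : Qubit) :
    ⟪tens (Function.update ψ j a), tens χ⟫_ℂ = ⟪a, χ j⟫_ℂ * ∏ i ∈ univ.erase j, ⟪ψ i, χ i⟫_ℂ := by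
  rw [inner_tens, ← mul_prod_erase _ _ (mem_univ j), Function.update_self]
  congr 1
  exact prod_congr rfl fun i hi => by rw [Function.update_of_ne (ne_of_mem_erase hi)]

lemma exists_eq_smul_of_tens_eq_smul {ψ χ : Fin n → Qubit} {c : ℂ} (h : tens χ = c • tens ψ)
    (hχ : tens χ ≠ 0) (j : Fin n) : ∃ t : ℂ, t ≠ 0 ∧ χ j = t • ψ j := by
  have hψ : ψ j ≠ 0 := tens_ne_zero_iff.mp (right_ne_zero_of_smul (h ▸ hχ)) j
  have hχ' := tens_ne_zero_iff.mp hχ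
  -- Changing the `j`-th factor of `χ` to `perp (ψ j)` gives a vector orthogonal to `c • tens ψ`.
  have hperp : ⟪(ψ j).perp, χ j⟫_ℂ = 0 := by
    have key := inner_tens_update χ χ j (ψ j).perp
    rw [h, inner_smul_right, inner_tens_update, Qubit.inner_perp_self, zero_mul, mul_zero,
      eq_comm, mul_eq_zero] at key
    exact key.resolve_right (prod_ne_zero_iff.mpr fun i _ => inner_self_ne_zero.mpr (hχ' i))
  obtain ⟨t, ht⟩ := Qubit.exists_eq_smul_of_inner_perp_eq_zero hψ hperp
  exact ⟨t, left_ne_zero_of_smul (ht ▸ hχ' j), ht⟩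

lemma exists_isUpper_iff_not_of_inner_tens_eq_zero {ψ χ : Fin n → Qubit} (hψ : tens ψ ≠ 0)
    (hχ : tens χ ≠ 0) (h : ⟪tens ψ, tens χ⟫_ℂ = 0) :
    ∃ j, (Qubit.IsUpper (χ j) ↔ ¬ Qubit.IsUpper (ψ j)) := by
  obtain ⟨j, -, hj⟩ := prod_eq_zero_iff.mp (inner_tens ψ χ ▸ h)
  exact ⟨j, Qubit.isUpper_iff_not_of_inner_eq_zero (tens_ne_zero_iff.mp hψ j)
    (tens_ne_zero_iff.mp hχ j) hj⟩

lemma tens_cons_add {m : ℕ} (a b : ℂ) (φ χ : Qubit) (ψ : Fin m → Qubit) :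
    tens (Fin.cons (a • φ + b • χ) ψ) = a • tens (Fin.cons φ ψ) + b • tens (Fin.cons χ ψ) := by
  ext x
  simp only [tens_apply, Fin.prod_univ_succ, Fin.cons_zero, Fin.cons_succ, PiLp.add_apply,
    PiLp.smul_apply, smul_eq_mul]
  ring

end tens

section IsONBasis

variable {H : Type*} [NormedAddCommGroup H] [InnerProductSpace ℂ H] {B : Finset H}

lemma IsONBasis.norm_eq_one (hB : IsONBasis B) {v : H} (hv : v ∈ B) : ‖v‖ = 1 :=
  hB.1.1 ⟨v, hv⟩

lemma IsONBasis.inner_eq_zero (hB : IsONBasis B) {v w : H} (hv : v ∈ B) (hw : w ∈ B)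
    (hvw : v ≠ w) : ⟪v, w⟫_ℂ = 0 :=
  hB.1.inner_eq_zero (i := ⟨v, hv⟩) (j := ⟨w, hw⟩) (Subtype.coe_ne_coe.mp hvw)

lemma IsONBasis.card_eq_finrank (hB : IsONBasis B) : #B = Module.finrank ℂ H := by
  rw [← finrank_span_finset_eq_card hB.1.linearIndependent, hB.2, finrank_top]

end IsONBasis

def upperProducts (n : ℕ) : Set (NQubit n) :=
  {v | ∃ (c : ℂ) (ψ : Fin n → Qubit), v = c • tens ψ ∧ ∀ j, (ψ j).IsUpper}

lemma smul_mem_upperProducts_iff {n : ℕ} {a : ℂ} (ha : a ≠ 0) {v : NQubit n} :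
    a • v ∈ upperProducts n ↔ v ∈ upperProducts n := by
  constructor
  · rintro ⟨c, ψ, hv, hψ⟩
    exact ⟨a⁻¹ * c, ψ, by rw [mul_smul, ← hv, inv_smul_smul₀ ha], hψ⟩
  · rintro ⟨c, ψ, rfl, hψ⟩
    exact ⟨a * c, ψ, (mul_smul a c _).symm, hψ⟩

lemma tens_mem_upperProducts_iff {n : ℕ} {ψ : Fin n → Qubit} (hψ : tens ψ ≠ 0) :
    tens ψ ∈ upperProducts n ↔ ∀ j, (ψ j).IsUpper := by
  refine ⟨?_, fun h => ⟨1, ψ, (one_smul ℂ _).symm, h⟩⟩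
  rintro ⟨c, χ, h, hχ⟩ j
  obtain ⟨t, ht, hψχ⟩ := exists_eq_smul_of_tens_eq_smul h hψ j
  rw [hψχ, Qubit.isUpper_smul_iff ht]
  exact hχ j

theorem sum_indicator_upperProducts {n : ℕ} {B : Finset (NQubit n)} (hB : IsONBasis B)
    (hprod : ∀ v ∈ B, IsProduct v) :
    ∑ v ∈ B, (upperProducts n).indicator (1 : NQubit n → ℝ) v = 1 := by
  choose! ψ hψ using hprod
  have hne : ∀ v ∈ B, tens (ψ v) ≠ 0 := fun v hv =>
    hψ v hv ▸ ne_zero_of_norm_ne_zero (by rw [hB.norm_eq_one hv]; exact one_ne_zero)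
  let pattern (v : NQubit n) : Set (Fin n) := {j | (ψ v j).IsUpper}
  have hinj : Set.InjOn pattern B := by
    intro v hv w hw hvw
    by_contra hvw'
    obtain ⟨j, hj⟩ := exists_isUpper_iff_not_of_inner_tens_eq_zero (hne v hv) (hne w hw)
      (by rw [← hψ v hv, ← hψ w hw]; exact hB.inner_eq_zero hv hw hvw')
    exact iff_not_self ((Set.ext_iff.mp hvw j).trans hj)
  have hsurj : Set.SurjOn pattern B (univ : Finset (Set (Fin n))) :=
    surjOn_of_injOn_of_card_le pattern (fun _ _ => mem_coe.mpr (mem_univ _)) hinj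
      (by simp [Fintype.card_set, hB.card_eq_finrank])
  obtain ⟨v₀, hv₀, hpattern⟩ := hsurj (mem_univ Set.univ)
  have hmem : ∀ v ∈ B, v ∈ upperProducts n ↔ pattern v = Set.univ := by
    intro v hv
    have h := tens_mem_upperProducts_iff (hne v hv)
    rw [← hψ v hv] at h
    rw [h, Set.eq_univ_iff_forall]
    rfl
  rw [sum_eq_single_of_mem v₀ hv₀ fun v hv hvv₀ => Set.indicator_of_notMem
    (fun h => hvv₀ (hinj hv hv₀ (((hmem v hv).mp h).trans hpattern.symm))) _]
  exact Set.indicator_of_mem ((hmem v₀ hv₀).mpr hpattern) _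

lemma exists_inner_map_self_notMem_zero_one {𝕜 E : Type*} [RCLike 𝕜] [SeminormedAddCommGroup E]
    [InnerProductSpace 𝕜 E] (ρ : E →ₗ[𝕜] E) {x y : E} (hx : ⟪x, ρ x⟫_𝕜 = 1)
    (hy : ⟪y, ρ y⟫_𝕜 = 0) :
    ∃ c s : ℝ, c ^ 2 + s ^ 2 = 1 ∧
      ⟪(c : 𝕜) • x + (s : 𝕜) • y, ρ ((c : 𝕜) • x + (s : 𝕜) • y)⟫_𝕜 ∉ ({0, 1} : Set 𝕜) := by
  have hq (c s : ℝ) : ⟪(c : 𝕜) • x + (s : 𝕜) • y, ρ ((c : 𝕜) • x + (s : 𝕜) • y)⟫_𝕜 =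
      c ^ 2 + c * s * (⟪x, ρ y⟫_𝕜 + ⟪y, ρ x⟫_𝕜) := by
    simp only [map_add, map_smul, inner_add_left, inner_add_right, inner_smul_left,
      inner_smul_right, RCLike.conj_ofReal, hx, hy]
    ring
  -- At `(3/5, 4/5)` and `(4/5, 3/5)` the mixed terms agree while the values differ by `7/25`.
  have hvalues : ∀ a b : 𝕜, a ∈ ({0, 1} : Set 𝕜) → b ∈ ({0, 1} : Set 𝕜) → b - a ≠ 7 / 25 := by
    rintro a b (rfl | rfl) (rfl | rfl) <;> norm_num
  by_contra! h
  exact hvalues _ _ (h (3 / 5) (4 / 5) (by norm_num)) (h (4 / 5) (3 / 5) (by norm_num))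
    (by rw [hq, hq]; push_cast; ring)

lemma not_forall_inner_map_self_eq_indicator {m : ℕ} (ρ : NQubit (m + 1) →ₗ[ℂ] NQubit (m + 1)) :
    ¬ ∀ v : NQubit (m + 1), IsProduct v → ‖v‖ = 1 →
      ⟪v, ρ v⟫_ℂ = ((upperProducts (m + 1)).indicator (1 : NQubit (m + 1) → ℝ) v : ℝ) := by
  intro hval
  let z (φ : Qubit) : NQubit (m + 1) := tens (Fin.cons φ fun _ => !₂[1, 0])
  have hunit (a b : ℂ) (h : ‖a‖ ^ 2 + ‖b‖ ^ 2 = 1) : ‖!₂[a, b]‖ = 1 := by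
    simp [EuclideanSpace.norm_eq, Fin.sum_univ_two, h]
  have hupper : Qubit.IsUpper !₂[1, 0] := Or.inl (by simp)
  have hz_norm (φ : Qubit) (hφ : ‖φ‖ = 1) : ‖z φ‖ = 1 := by
    simp [z, norm_tens, Fin.prod_univ_succ, hφ, hunit 1 0 (by norm_num)]
  have hz_mem (φ : Qubit) (hφ : ‖φ‖ = 1) : z φ ∈ upperProducts (m + 1) ↔ φ.IsUpper := by
    rw [tens_mem_upperProducts_iff (ne_zero_of_norm_ne_zero ((hz_norm φ hφ).symm ▸ one_ne_zero)),
      Fin.forall_fin_succ]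
    simp [hupper]
  have hz_val (φ : Qubit) (hφ : ‖φ‖ = 1) := hval (z φ) ⟨_, rfl⟩ (hz_norm φ hφ)
  have h₁₀ : ‖(!₂[1, 0] : Qubit)‖ = 1 := hunit 1 0 (by norm_num)
  have h₀₁ : ‖(!₂[0, 1] : Qubit)‖ = 1 := hunit 0 1 (by norm_num)
  have hx : ⟪z !₂[1, 0], ρ (z !₂[1, 0])⟫_ℂ = 1 := by
    rw [hz_val _ h₁₀, Set.indicator_of_mem ((hz_mem _ h₁₀).mpr hupper)]
    simp
  have hy : ⟪z !₂[0, 1], ρ (z !₂[0, 1])⟫_ℂ = 0 := by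
    rw [hz_val _ h₀₁, Set.indicator_of_notMem (mt (hz_mem _ h₀₁).mp (by simp [Qubit.IsUpper]))]
    simp
  obtain ⟨c, s, hcs, hns⟩ := exists_inner_map_self_notMem_zero_one ρ hx hy
  have hlin : z !₂[c, s] = (c : ℂ) • z !₂[1, 0] + (s : ℂ) • z !₂[0, 1] := by
    simp only [z, ← tens_cons_add]
    congr
    ext i
    fin_cases i <;> simp
  simp only [RCLike.ofReal_eq_complex_ofReal] at hns
  rw [← hlin, hz_val _ (hunit c s (by simpa using hcs))] at hns
  by_cases h : z !₂[c, s] ∈ upperProducts (m + 1) <;> simp [h] at hns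

/-- failure of Gleason's theorem for unentangled multiqubit projections:
for every `n ≥ 1` there is a `{0,1}`-valued function `f` on the product unit vectors of
`(ℂ²)^{⊗n}`, depending only on rays, summing to `1` over every orthonormal basis of
product vectors, which is not of the form `f ψ = ⟨ψ, ρ ψ⟩` for any density operator `ρ`
(a positive semidefinite self-adjoint operator of trace `1`). -/
theorem gleason_fails_for_unentangled_multiqubit (n : ℕ) (hn : 1 ≤ n) :
    ∃ f : NQubit n → ℝ,
      (∀ v : NQubit n, IsProduct v → ‖v‖ = 1 → (f v = 0 ∨ f v = 1)) ∧
      (∀ v w : NQubit n, IsProduct v → ‖v‖ = 1 → ‖w‖ = 1 →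
        (∃ a : ℂ, a ≠ 0 ∧ w = a • v) → f w = f v) ∧
      (∀ B : Finset (NQubit n), IsONBasis B → (∀ v ∈ B, IsProduct v) →
        ∑ v ∈ B, f v = 1) ∧
      ¬ ∃ ρ : NQubit n →ₗ[ℂ] NQubit n,
        (∀ x y : NQubit n, ⟪ρ x, y⟫_ℂ = ⟪x, ρ y⟫_ℂ) ∧
        (∀ x : NQubit n, 0 ≤ (⟪x, ρ x⟫_ℂ).re) ∧
        LinearMap.trace ℂ (NQubit n) ρ = 1 ∧
        (∀ v : NQubit n, IsProduct v → ‖v‖ = 1 → ⟪v, ρ v⟫_ℂ = (f v : ℂ)) := by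
  refine ⟨(upperProducts n).indicator 1, fun v _ _ => Set.indicator_eq_zero_or_self _ _ v, ?_,
    fun B hB hprod => sum_indicator_upperProducts hB hprod, ?_⟩
  · rintro v w - - - ⟨a, ha, rfl⟩
    classical
    simp only [Set.indicator_apply, smul_mem_upperProducts_iff ha, Pi.one_apply]
  · rintro ⟨ρ, -, -, -, hval⟩
    obtain ⟨m, rfl⟩ := Nat.exists_eq_add_of_le' hn
    exact not_forall_inner_map_self_eq_indicator ρ hval

end
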